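/- arXiv:1303.4622 — 7 statements merged into one kernel-verified Lean document; each statement's English description precedes it below -/
import Mathlib

section
/- In the lower-triangular array setting, the derivative of the lower-triangular post-array block satisfies (L21)'(θ₀) = (𝓤ᵀ + 𝓓 + 𝓛) · L21(θ₀), where 𝓛, 𝓓, 𝓤 are the strictly lower-triangular, diagonal, and strictly upper-triangular parts of Y · L21(θ₀)⁻¹. -/
/-!
Write `S = Q' Qᵀ` at `θ₀`; differentiating `Q Qᵀ = 1` shows that `S` is skew-symmetric, and
`Q' A = S (Q A)`. Reading off the bottom-left block of the derivative of
`Q A = [[0, L12], [L21, L22]]` then gives `L21' = S₂₂ L21 + Y`, i.e.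
`L21' L21⁻¹ = S₂₂ + Y L21⁻¹`. The left side is lower triangular, and the only way to make a
skew-symmetric matrix plus `M = Y L21⁻¹` lower triangular is to cancel the strict upper part
`𝓤` of `M`, which adds `𝓤ᵀ` below the diagonal: the sum is `𝓤ᵀ + 𝓓 + 𝓛`.
-/

open Matrix

/-- Strictly lower-triangular part of a square matrix. -/
noncomputable def strictLowerPart {s : ℕ} (M : Matrix (Fin s) (Fin s) ℝ) :
    Matrix (Fin s) (Fin s) ℝ :=
  Matrix.of fun i j => if j < i then M i j else 0

/-- Diagonal part of a square matrix. -/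
noncomputable def diagPart {s : ℕ} (M : Matrix (Fin s) (Fin s) ℝ) :
    Matrix (Fin s) (Fin s) ℝ :=
  Matrix.of fun i j => if i = j then M i j else 0

/-- Strictly upper-triangular part of a square matrix. -/
noncomputable def strictUpperPart {s : ℕ} (M : Matrix (Fin s) (Fin s) ℝ) :
    Matrix (Fin s) (Fin s) ℝ :=
  Matrix.of fun i j => if i < j then M i j else 0

section EntrywiseDeriv

variable {m n p : Type*}

/-- Matrix types carry no default norm, so derivatives of matrix-valued functions are taken
entrywise. -/
def HasEntrywiseDerivAt (F : ℝ → Matrix m n ℝ) (F' : Matrix m n ℝ) (t : ℝ) : Prop :=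
  ∀ i j, HasDerivAt (fun τ => F τ i j) (F' i j) t

theorem HasEntrywiseDerivAt.unique {F : ℝ → Matrix m n ℝ} {F₁ F₂ : Matrix m n ℝ} {t : ℝ}
    (h₁ : HasEntrywiseDerivAt F F₁ t) (h₂ : HasEntrywiseDerivAt F F₂ t) : F₁ = F₂ :=
  Matrix.ext fun i j => (h₁ i j).unique (h₂ i j)

theorem hasEntrywiseDerivAt_const (M : Matrix m n ℝ) (t : ℝ) :
    HasEntrywiseDerivAt (fun _ => M) 0 t :=
  fun i j => hasDerivAt_const t (M i j)

theorem HasEntrywiseDerivAt.transpose {F : ℝ → Matrix m n ℝ} {F' : Matrix m n ℝ} {t : ℝ}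
    (h : HasEntrywiseDerivAt F F' t) : HasEntrywiseDerivAt (fun τ => (F τ)ᵀ) F'ᵀ t :=
  fun i j => h j i

theorem HasEntrywiseDerivAt.mul [Fintype n] {F : ℝ → Matrix m n ℝ} {G : ℝ → Matrix n p ℝ}
    {F' : Matrix m n ℝ} {G' : Matrix n p ℝ} {t : ℝ}
    (hF : HasEntrywiseDerivAt F F' t) (hG : HasEntrywiseDerivAt G G' t) :
    HasEntrywiseDerivAt (fun τ => F τ * G τ) (F' * G t + F t * G') t := by
  intro i j
  simp only [Matrix.add_apply, mul_apply, ← Finset.sum_add_distrib]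
  exact HasDerivAt.fun_sum fun k _ => (hF i k).mul (hG k j)

theorem HasEntrywiseDerivAt.toBlocks₂₁ {m₁ m₂ n₁ n₂ : Type*}
    {F : ℝ → Matrix (m₁ ⊕ m₂) (n₁ ⊕ n₂) ℝ} {F' : Matrix (m₁ ⊕ m₂) (n₁ ⊕ n₂) ℝ} {t : ℝ}
    (h : HasEntrywiseDerivAt F F' t) :
    HasEntrywiseDerivAt (fun τ => (F τ).toBlocks₂₁) F'.toBlocks₂₁ t :=
  fun i j => h (Sum.inr i) (Sum.inl j)

end EntrywiseDeriv

theorem transpose_deriv_mul_transpose_of_mul_transpose_eq_one {n : Type*} [Fintype n]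
    [DecidableEq n] {Q : ℝ → Matrix n n ℝ} {Q' : Matrix n n ℝ} {t : ℝ}
    (hQ : HasEntrywiseDerivAt Q Q' t) (horth : ∀ τ, Q τ * (Q τ)ᵀ = 1) :
    (Q' * (Q t)ᵀ)ᵀ = -(Q' * (Q t)ᵀ) := by
  have hzero : Q' * (Q t)ᵀ + Q t * Q'ᵀ = 0 := by
    refine (hQ.mul hQ.transpose).unique ?_
    simpa only [horth] using hasEntrywiseDerivAt_const (1 : Matrix n n ℝ) t
  rw [transpose_mul, transpose_transpose, eq_neg_iff_add_eq_zero, add_comm, hzero]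

namespace Matrix

theorem toBlocks₂₁_add {m₁ m₂ n₁ n₂ α : Type*} [Add α] (M N : Matrix (m₁ ⊕ m₂) (n₁ ⊕ n₂) α) :
    (M + N).toBlocks₂₁ = M.toBlocks₂₁ + N.toBlocks₂₁ :=
  rfl

theorem toBlocks₂₁_mul_fromBlocks_zero {m₁ m₂ n₁ n₂ α : Type*} [Fintype m₁] [Fintype m₂]
    [NonUnitalNonAssocSemiring α] (S : Matrix (m₁ ⊕ m₂) (m₁ ⊕ m₂) α)
    (B : Matrix m₁ n₂ α) (C : Matrix m₂ n₁ α) (D : Matrix m₂ n₂ α) :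
    (S * fromBlocks 0 B C D).toBlocks₂₁ = S.toBlocks₂₂ * C := by
  rw [← fromBlocks_toBlocks S, fromBlocks_multiply]
  simp

theorem BlockTriangular.of_hasEntrywiseDerivAt {n α : Type*} [LT α] {F : ℝ → Matrix n n ℝ}
    {F' : Matrix n n ℝ} {t : ℝ} {b : n → α}
    (h : HasEntrywiseDerivAt F F' t) (hF : ∀ τ, BlockTriangular (F τ) b) :
    BlockTriangular F' b := by
  intro i j hij
  have hconst : (fun τ => F τ i j) = fun _ => 0 := funext fun τ => hF τ hij
  exact (h i j).unique (hconst ▸ hasDerivAt_const t 0)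

end Matrix

theorem eq_triangularParts_of_eq_skew_add {s : ℕ} {P K M : Matrix (Fin s) (Fin s) ℝ}
    (hP : BlockTriangular P OrderDual.toDual) (hK : Kᵀ = -K) (h : P = K + M) :
    P = (strictUpperPart M)ᵀ + diagPart M + strictLowerPart M := by
  have hKji (i j : Fin s) : K j i = -K i j := congrFun (congrFun hK i) j
  ext i j
  simp only [Matrix.add_apply, transpose_apply, strictUpperPart, diagPart, strictLowerPart,
    of_apply]
  rcases lt_trichotomy i j with hij | rfl | hij
  · have hPij : P i j = 0 := hP (by simpa using hij)
    simp [hij.ne, hij.not_gt, hPij]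
  · have hKii : K i i = 0 := by linarith [hKji i i]
    simp [h, hKii]
  · have hPji : P j i = 0 := hP (by simpa using hij)
    rw [h, Matrix.add_apply] at hPji
    simp [hij, hij.ne', h, hKji j i]
    linarith

theorem lowerTriangularCase_L21_deriv_general
    (s k l : ℕ)
    (A A' : ℝ → Matrix (Fin k ⊕ Fin s) (Fin s ⊕ Fin l) ℝ)
    (Q Q' : ℝ → Matrix (Fin k ⊕ Fin s) (Fin k ⊕ Fin s) ℝ)
    (hA : ∀ θ i j, HasDerivAt (fun t => A t i j) (A' θ i j) θ)
    (hQ : ∀ θ i j, HasDerivAt (fun t => Q t i j) (Q' θ i j) θ)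
    (hQorth : ∀ θ, Q θ * (Q θ)ᵀ = 1)
    (L12 : ℝ → Matrix (Fin k) (Fin l) ℝ)
    (L21 : ℝ → Matrix (Fin s) (Fin s) ℝ)
    (L22 : ℝ → Matrix (Fin s) (Fin l) ℝ)
    (hblock : ∀ θ, Q θ * A θ = Matrix.fromBlocks 0 (L12 θ) (L21 θ) (L22 θ))
    (hlow : ∀ θ (i j : Fin s), i < j → L21 θ i j = 0)
    (hinv : ∀ θ, IsUnit (L21 θ))
    (θ₀ : ℝ)
    (X : Matrix (Fin k) (Fin s) ℝ) (N : Matrix (Fin k) (Fin l) ℝ)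
    (Y : Matrix (Fin s) (Fin s) ℝ) (V : Matrix (Fin s) (Fin l) ℝ)
    (hXNYV : Q θ₀ * A' θ₀ = Matrix.fromBlocks X N Y V)
    (L21' : Matrix (Fin s) (Fin s) ℝ)
    (hL21' : ∀ i j, HasDerivAt (fun t => L21 t i j) (L21' i j) θ₀) :
    L21' = ((strictUpperPart (Y * (L21 θ₀)⁻¹))ᵀ + diagPart (Y * (L21 θ₀)⁻¹)
      + strictLowerPart (Y * (L21 θ₀)⁻¹)) * L21 θ₀ := by
  have hQ₀ : HasEntrywiseDerivAt Q (Q' θ₀) θ₀ := hQ θ₀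
  have hA₀ : HasEntrywiseDerivAt A (A' θ₀) θ₀ := hA θ₀
  set S := Q' θ₀ * (Q θ₀)ᵀ
  have hS : Sᵀ = -S := transpose_deriv_mul_transpose_of_mul_transpose_eq_one hQ₀ hQorth
  have hQ'A : Q' θ₀ * A θ₀ = S * (Q θ₀ * A θ₀) := by
    rw [Matrix.mul_assoc, ← Matrix.mul_assoc (Q θ₀)ᵀ, mul_eq_one_comm.mp (hQorth θ₀),
      Matrix.one_mul]
  have hL21'_eq : L21' = S.toBlocks₂₂ * L21 θ₀ + Y := by
    have hQA : HasEntrywiseDerivAt L21 (Q' θ₀ * A θ₀ + Q θ₀ * A' θ₀).toBlocks₂₁ θ₀ := by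
      simpa only [hblock, toBlocks_fromBlocks₂₁] using (hQ₀.mul hA₀).toBlocks₂₁
    rw [HasEntrywiseDerivAt.unique hL21' hQA, toBlocks₂₁_add, hQ'A, hblock θ₀, hXNYV,
      toBlocks₂₁_mul_fromBlocks_zero, toBlocks_fromBlocks₂₁]
  have hdet : IsUnit (L21 θ₀).det := (isUnit_iff_isUnit_det _).mp (hinv θ₀)
  have : Invertible (L21 θ₀) := (hinv θ₀).invertible
  have hlowP : BlockTriangular (L21' * (L21 θ₀)⁻¹) OrderDual.toDual :=
    (BlockTriangular.of_hasEntrywiseDerivAt hL21' fun θ _ _ h => hlow θ _ _ h).mul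
      (blockTriangular_inv_of_blockTriangular fun _ _ h => hlow θ₀ _ _ h)
  have hP : L21' * (L21 θ₀)⁻¹ = S.toBlocks₂₂ + Y * (L21 θ₀)⁻¹ := by
    rw [hL21'_eq, Matrix.add_mul, Matrix.mul_assoc, mul_nonsing_inv _ hdet, Matrix.mul_one]
  rw [← eq_triangularParts_of_eq_skew_add hlowP (congrArg toBlocks₂₂ hS) hP, Matrix.mul_assoc,
    nonsing_inv_mul _ hdet, Matrix.mul_one]

/-- Lower triangular array case: the derivative of the lower-triangular post-array block
satisfies `(L21)' = (𝓤ᵀ + 𝓓 + 𝓛) * L21`, where `𝓛, 𝓓, 𝓤` are the strictly lower-triangular,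
diagonal and strictly upper-triangular parts of `Y * L21⁻¹`. -/
theorem lowerTriangularCase_L21_deriv
    (s k l : ℕ) (hs : 0 < s)
    (A A' : ℝ → Matrix (Fin k ⊕ Fin s) (Fin s ⊕ Fin l) ℝ)
    (Q Q' : ℝ → Matrix (Fin k ⊕ Fin s) (Fin k ⊕ Fin s) ℝ)
    (hA : ∀ θ i j, HasDerivAt (fun t => A t i j) (A' θ i j) θ)
    (hQ : ∀ θ i j, HasDerivAt (fun t => Q t i j) (Q' θ i j) θ)
    (hQorth : ∀ θ, Q θ * (Q θ)ᵀ = 1)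
    (L12 : ℝ → Matrix (Fin k) (Fin l) ℝ)
    (L21 : ℝ → Matrix (Fin s) (Fin s) ℝ)
    (L22 : ℝ → Matrix (Fin s) (Fin l) ℝ)
    (hblock : ∀ θ, Q θ * A θ = Matrix.fromBlocks 0 (L12 θ) (L21 θ) (L22 θ))
    (hlow : ∀ θ (i j : Fin s), i < j → L21 θ i j = 0)
    (hinv : ∀ θ, IsUnit (L21 θ))
    (θ₀ : ℝ)
    (X : Matrix (Fin k) (Fin s) ℝ) (N : Matrix (Fin k) (Fin l) ℝ)
    (Y : Matrix (Fin s) (Fin s) ℝ) (V : Matrix (Fin s) (Fin l) ℝ)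
    (hXNYV : Q θ₀ * A' θ₀ = Matrix.fromBlocks X N Y V)
    (L21' : Matrix (Fin s) (Fin s) ℝ)
    (hL21' : ∀ i j, HasDerivAt (fun t => L21 t i j) (L21' i j) θ₀) :
    L21' = ((strictUpperPart (Y * (L21 θ₀)⁻¹))ᵀ + diagPart (Y * (L21 θ₀)⁻¹)
      + strictLowerPart (Y * (L21 θ₀)⁻¹)) * L21 θ₀ :=
  lowerTriangularCase_L21_deriv_general s k l A A' Q Q' hA hQ hQorth L12 L21 L22 hblock hlow hinv θ₀
    X N Y V hXNYV L21' hL21'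
end

section
/- In the lower-triangular array setting, the derivative of the post-array block L22 satisfies (L22)'(θ₀) = (𝓤ᵀ − 𝓤) · L22(θ₀) + (L21(θ₀))⁻ᵀ · Xᵀ · L12(θ₀) + V, where 𝓤 is the strictly upper-triangular part of Y · L21(θ₀)⁻¹ and (L21(θ₀))⁻ᵀ denotes the transpose of the inverse of L21(θ₀). -/
open Matrix

/-!
Differentiating `Q A = [[0, L12], [L21, L22]]` and using `A = Qᵀ (Q A)` gives
`(Q A)' = S (Q A) + Q A'` with `S = Q' Qᵀ`, which is skew-symmetric because `Q Qᵀ = 1`.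
In blocks, the vanishing top-left block yields `S12 = -X L21⁻¹`, hence `S21 = -S12ᵀ = L21⁻ᵀ Xᵀ`;
the lower-triangularity of `L21` and `L21'` makes `S22 + Y L21⁻¹` lower triangular, which
together with skew-symmetry pins down `S22 = 𝓤ᵀ - 𝓤`. The bottom-right block is then the formula.
-/

theorem HasDerivAt.eq_zero_of_forall_eq_zero {f : ℝ → ℝ} {f' x : ℝ} (hf : HasDerivAt f f' x)
    (h : ∀ t, f t = 0) : f' = 0 :=
  hf.unique (by simpa [funext h] using hasDerivAt_const x (0 : ℝ))

section MatrixDeriv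

variable {ι κ σ : Type*}

theorem hasDerivAt_matrix_mul_apply [Fintype κ] {M : ℝ → Matrix ι κ ℝ} {N : ℝ → Matrix κ σ ℝ}
    {M' : Matrix ι κ ℝ} {N' : Matrix κ σ ℝ} {θ : ℝ}
    (hM : ∀ i j, HasDerivAt (fun t => M t i j) (M' i j) θ)
    (hN : ∀ i j, HasDerivAt (fun t => N t i j) (N' i j) θ) (i : ι) (j : σ) :
    HasDerivAt (fun t => (M t * N t) i j) ((M' * N θ + M θ * N') i j) θ := by
  simp only [mul_apply, Matrix.add_apply, ← Finset.sum_add_distrib]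
  exact HasDerivAt.fun_sum fun m _ => (hM i m).mul (hN m j)

variable [Fintype ι] [DecidableEq ι] {Q : ℝ → Matrix ι ι ℝ} {Q' : Matrix ι ι ℝ} {θ : ℝ}

theorem transpose_deriv_mul_transpose_eq_neg
    (hQ : ∀ i j, HasDerivAt (fun t => Q t i j) (Q' i j) θ) (horth : ∀ t, Q t * (Q t)ᵀ = 1) :
    (Q' * (Q θ)ᵀ)ᵀ = -(Q' * (Q θ)ᵀ) := by
  have hsum : Q' * (Q θ)ᵀ + Q θ * Q'ᵀ = 0 := by
    ext i j
    have hconst : HasDerivAt (fun t => (Q t * (Q t)ᵀ) i j) 0 θ := by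
      simpa only [horth] using hasDerivAt_const θ ((1 : Matrix ι ι ℝ) i j)
    exact (hasDerivAt_matrix_mul_apply hQ (fun i j => hQ j i) i j).unique hconst
  rw [transpose_mul, transpose_transpose]
  exact eq_neg_of_add_eq_zero_right hsum

theorem hasDerivAt_orthogonal_mul_apply [Fintype κ] {A : ℝ → Matrix ι κ ℝ} {A' : Matrix ι κ ℝ}
    (hQ : ∀ i j, HasDerivAt (fun t => Q t i j) (Q' i j) θ)
    (hA : ∀ i j, HasDerivAt (fun t => A t i j) (A' i j) θ) (horth : Q θ * (Q θ)ᵀ = 1)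
    (i : ι) (j : κ) :
    HasDerivAt (fun t => (Q t * A t) i j) ((Q' * (Q θ)ᵀ * (Q θ * A θ) + Q θ * A') i j) θ := by
  have hA_eq : A θ = (Q θ)ᵀ * (Q θ * A θ) := by
    rw [← Matrix.mul_assoc, mul_eq_one_comm.mp horth, Matrix.one_mul]
  simpa only [Matrix.mul_assoc, ← hA_eq] using hasDerivAt_matrix_mul_apply hQ hA i j

end MatrixDeriv

theorem eq_transpose_strictUpperPart_sub_of_skew {s : ℕ} {K W : Matrix (Fin s) (Fin s) ℝ}
    (hK : Kᵀ = -K) (hKW : (K + W).BlockTriangular OrderDual.toDual) :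
    K = (strictUpperPart W)ᵀ - strictUpperPart W := by
  have hskew : ∀ i j, K j i = -K i j := fun i j => congrFun (congrFun hK i) j
  have hupper : ∀ {i j : Fin s}, i < j → K i j = -W i j := fun hij =>
    eq_neg_of_add_eq_zero_left (hKW hij)
  ext i j
  rcases lt_trichotomy i j with hij | rfl | hij
  · simp [strictUpperPart, hij, hij.not_gt, hupper hij]
  · simpa [strictUpperPart] using CharZero.eq_neg_self_iff.mp (hskew i i)
  · simp [strictUpperPart, hij, hij.not_gt, hskew j i, hupper hij]

theorem lowerTriangularCase_L22_deriv_general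
    (s k l : ℕ)
    (A A' : ℝ → Matrix (Fin k ⊕ Fin s) (Fin s ⊕ Fin l) ℝ)
    (Q Q' : ℝ → Matrix (Fin k ⊕ Fin s) (Fin k ⊕ Fin s) ℝ)
    (hA : ∀ θ i j, HasDerivAt (fun t => A t i j) (A' θ i j) θ)
    (hQ : ∀ θ i j, HasDerivAt (fun t => Q t i j) (Q' θ i j) θ)
    (hQorth : ∀ θ, Q θ * (Q θ)ᵀ = 1)
    (L12 : ℝ → Matrix (Fin k) (Fin l) ℝ)
    (L21 : ℝ → Matrix (Fin s) (Fin s) ℝ)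
    (L22 : ℝ → Matrix (Fin s) (Fin l) ℝ)
    (hblock : ∀ θ, Q θ * A θ = Matrix.fromBlocks 0 (L12 θ) (L21 θ) (L22 θ))
    (hlow : ∀ θ (i j : Fin s), i < j → L21 θ i j = 0)
    (hinv : ∀ θ, IsUnit (L21 θ))
    (θ₀ : ℝ)
    (X : Matrix (Fin k) (Fin s) ℝ) (N : Matrix (Fin k) (Fin l) ℝ)
    (Y : Matrix (Fin s) (Fin s) ℝ) (V : Matrix (Fin s) (Fin l) ℝ)
    (hXNYV : Q θ₀ * A' θ₀ = Matrix.fromBlocks X N Y V)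
    (L22' : Matrix (Fin s) (Fin l) ℝ)
    (hL22' : ∀ i j, HasDerivAt (fun t => L22 t i j) (L22' i j) θ₀) :
    L22' = ((strictUpperPart (Y * (L21 θ₀)⁻¹))ᵀ - strictUpperPart (Y * (L21 θ₀)⁻¹)) * L22 θ₀
      + ((L21 θ₀)⁻¹)ᵀ * Xᵀ * L12 θ₀ + V := by
  set L := L21 θ₀
  have : Invertible L := (hinv θ₀).invertible
  obtain ⟨S11, S12, S21, S22, hS⟩ : ∃ S11 S12 S21 S22,
      Q' θ₀ * (Q θ₀)ᵀ = fromBlocks S11 S12 S21 S22 := ⟨_, _, _, _, (fromBlocks_toBlocks _).symm⟩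
  have hskew := transpose_deriv_mul_transpose_eq_neg (hQ θ₀) hQorth
  rw [hS, fromBlocks_transpose, fromBlocks_neg] at hskew
  obtain ⟨-, hS21, -, hS22⟩ := fromBlocks_inj.mp hskew
  have hD : ∀ i j, HasDerivAt (fun t => fromBlocks 0 (L12 t) (L21 t) (L22 t) i j)
      (fromBlocks (S12 * L + X) (S11 * L12 θ₀ + S12 * L22 θ₀ + N)
        (S22 * L + Y) (S21 * L12 θ₀ + S22 * L22 θ₀ + V) i j) θ₀ := by
    intro i j
    have h := hasDerivAt_orthogonal_mul_apply (hQ θ₀) (hA θ₀) (hQorth θ₀) i j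
    rw [hblock, hS, hXNYV, fromBlocks_multiply, fromBlocks_add] at h
    simpa only [hblock, Matrix.mul_zero, Matrix.zero_mul, zero_add, add_zero] using h
  have hX : S12 * L + X = 0 := ext fun i j =>
    (hD (.inl i) (.inl j)).eq_zero_of_forall_eq_zero fun t => rfl
  have hY : (S22 * L + Y).BlockTriangular OrderDual.toDual := fun i j hij =>
    (hD (.inr i) (.inl j)).eq_zero_of_forall_eq_zero fun t => hlow t i j hij
  have hV : L22' = S21 * L12 θ₀ + S22 * L22 θ₀ + V := ext fun i j =>
    (hL22' i j).unique (hD (.inr i) (.inr j))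
  have hS12 : S12 = -X * L⁻¹ := by
    rw [← eq_neg_of_add_eq_zero_left hX, mul_inv_cancel_right_of_invertible]
  have hYL : (S22 + Y * L⁻¹).BlockTriangular OrderDual.toDual := by
    rw [← mul_inv_cancel_right_of_invertible (A := L) S22, ← add_mul]
    exact hY.mul (blockTriangular_inv_of_blockTriangular fun i j hij => hlow θ₀ i j hij)
  rw [hV, eq_transpose_strictUpperPart_sub_of_skew hS22 hYL, ← transpose_transpose S21, hS21, hS12]
  simp only [Matrix.neg_mul, neg_neg, transpose_mul]
  abel

/-- Lower triangular array case: the derivative of the post-array block L22 satisfies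
`(L22)' = (𝓤ᵀ − 𝓤) * L22 + L21⁻ᵀ * Xᵀ * L12 + V`, where `𝓤` is the strictly
upper-triangular part of `Y * L21⁻¹`. -/
theorem lowerTriangularCase_L22_deriv
    (s k l : ℕ) (hs : 0 < s)
    (A A' : ℝ → Matrix (Fin k ⊕ Fin s) (Fin s ⊕ Fin l) ℝ)
    (Q Q' : ℝ → Matrix (Fin k ⊕ Fin s) (Fin k ⊕ Fin s) ℝ)
    (hA : ∀ θ i j, HasDerivAt (fun t => A t i j) (A' θ i j) θ)
    (hQ : ∀ θ i j, HasDerivAt (fun t => Q t i j) (Q' θ i j) θ)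
    (hQorth : ∀ θ, Q θ * (Q θ)ᵀ = 1)
    (L12 : ℝ → Matrix (Fin k) (Fin l) ℝ)
    (L21 : ℝ → Matrix (Fin s) (Fin s) ℝ)
    (L22 : ℝ → Matrix (Fin s) (Fin l) ℝ)
    (hblock : ∀ θ, Q θ * A θ = Matrix.fromBlocks 0 (L12 θ) (L21 θ) (L22 θ))
    (hlow : ∀ θ (i j : Fin s), i < j → L21 θ i j = 0)
    (hinv : ∀ θ, IsUnit (L21 θ))
    (θ₀ : ℝ)
    (X : Matrix (Fin k) (Fin s) ℝ) (N : Matrix (Fin k) (Fin l) ℝ)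
    (Y : Matrix (Fin s) (Fin s) ℝ) (V : Matrix (Fin s) (Fin l) ℝ)
    (hXNYV : Q θ₀ * A' θ₀ = Matrix.fromBlocks X N Y V)
    (L22' : Matrix (Fin s) (Fin l) ℝ)
    (hL22' : ∀ i j, HasDerivAt (fun t => L22 t i j) (L22' i j) θ₀) :
    L22' = ((strictUpperPart (Y * (L21 θ₀)⁻¹))ᵀ - strictUpperPart (Y * (L21 θ₀)⁻¹)) * L22 θ₀
      + ((L21 θ₀)⁻¹)ᵀ * Xᵀ * L12 θ₀ + V :=
  lowerTriangularCase_L22_deriv_general s k l A A' Q Q' hA hQ hQorth L12 L21 L22 hblock hlow hinv θ₀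
    X N Y V hXNYV L22' hL22'
end

section
/- In the lower-triangular array setting, the top-right k×s block of Q'(θ₀) · Q(θ₀)ᵀ (the block formed by the first k rows and the last s columns) equals −X · L21(θ₀)⁻¹. -/
open Matrix

/-
Differentiate `Q θ * A θ = fromBlocks 0 L12 L21 L22` entrywise: the top-left block of
`Q' A + Q A'` vanishes. Orthogonality rewrites `Q' A` as `(Q' Qᵀ) (Q A)`, whose top-left block is
`(Q' Qᵀ)₁₂ L21` because the top-left block of `Q A` is zero. Hence `(Q' Qᵀ)₁₂ L21 + X = 0`, and
`L21` is invertible.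
-/

section Calculus

variable {𝕜 𝔸 : Type*} [NontriviallyNormedField 𝕜] [NormedRing 𝔸] [NormedAlgebra 𝕜 𝔸]
  {l m n o p : Type*} {x : 𝕜}

theorem HasDerivAt.matrix_mul_apply [Fintype n] {A : 𝕜 → Matrix m n 𝔸} {B : 𝕜 → Matrix n p 𝔸}
    {A' : Matrix m n 𝔸} {B' : Matrix n p 𝔸}
    (hA : ∀ i j, HasDerivAt (fun t => A t i j) (A' i j) x)
    (hB : ∀ i j, HasDerivAt (fun t => B t i j) (B' i j) x) (i : m) (j : p) :
    HasDerivAt (fun t => (A t * B t) i j) ((A' * B x + A x * B') i j) x := by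
  simp only [mul_apply, Matrix.add_apply]
  rw [← Finset.sum_add_distrib]
  exact HasDerivAt.fun_sum fun k _ => (hA i k).mul (hB k j)

theorem toBlocks₁₁_eq_zero_of_hasDerivAt {M : 𝕜 → Matrix (n ⊕ o) (l ⊕ m) 𝔸}
    {M' : Matrix (n ⊕ o) (l ⊕ m) 𝔸} (hM : ∀ i j, HasDerivAt (fun t => M t i j) (M' i j) x)
    (h₀ : ∀ t, (M t).toBlocks₁₁ = 0) : M'.toBlocks₁₁ = 0 := by
  ext i j
  have hconst : (fun t => M t (Sum.inl i) (Sum.inl j)) = fun _ => 0 :=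
    funext fun t => congrFun₂ (h₀ t) i j
  exact (hM (Sum.inl i) (Sum.inl j)).unique (hconst ▸ hasDerivAt_const x 0)

end Calculus

section Algebra

variable {R : Type*} [CommRing R] {l m n o p : Type*}

theorem mul_eq_mul_transpose_mul_of_mul_transpose_eq_one [Fintype n] [DecidableEq n]
    {Q : Matrix n n R} (hQ : Q * Qᵀ = 1) (P : Matrix m n R) (A : Matrix n p R) :
    P * A = P * Qᵀ * (Q * A) := by
  rw [Matrix.mul_assoc, ← Matrix.mul_assoc Qᵀ, mul_eq_one_comm.mp hQ, Matrix.one_mul]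

theorem toBlocks₁₁_mul_fromBlocks_zero [Fintype n] [Fintype o]
    (M : Matrix (l ⊕ o) (n ⊕ o) R) (B : Matrix n m R) (C : Matrix o p R) (D : Matrix o m R) :
    (M * fromBlocks 0 B C D).toBlocks₁₁ = M.toBlocks₁₂ * C := by
  rw [← fromBlocks_toBlocks M, fromBlocks_multiply, toBlocks_fromBlocks₁₁, toBlocks_fromBlocks₁₂,
    Matrix.mul_zero, zero_add]

end Algebra

theorem lowerTriangularCase_block12_of_skew_general
    (s k l : ℕ)
    (A A' : ℝ → Matrix (Fin k ⊕ Fin s) (Fin s ⊕ Fin l) ℝ)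
    (Q Q' : ℝ → Matrix (Fin k ⊕ Fin s) (Fin k ⊕ Fin s) ℝ)
    (hA : ∀ θ i j, HasDerivAt (fun t => A t i j) (A' θ i j) θ)
    (hQ : ∀ θ i j, HasDerivAt (fun t => Q t i j) (Q' θ i j) θ)
    (hQorth : ∀ θ, Q θ * (Q θ)ᵀ = 1)
    (L12 : ℝ → Matrix (Fin k) (Fin l) ℝ)
    (L21 : ℝ → Matrix (Fin s) (Fin s) ℝ)
    (L22 : ℝ → Matrix (Fin s) (Fin l) ℝ)
    (hblock : ∀ θ, Q θ * A θ = Matrix.fromBlocks 0 (L12 θ) (L21 θ) (L22 θ))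
    (hinv : ∀ θ, IsUnit (L21 θ))
    (θ₀ : ℝ)
    (X : Matrix (Fin k) (Fin s) ℝ) (N : Matrix (Fin k) (Fin l) ℝ)
    (Y : Matrix (Fin s) (Fin s) ℝ) (V : Matrix (Fin s) (Fin l) ℝ)
    (hXNYV : Q θ₀ * A' θ₀ = Matrix.fromBlocks X N Y V) :
    (Q' θ₀ * (Q θ₀)ᵀ).toBlocks₁₂ = -(X * (L21 θ₀)⁻¹) := by
  have hderiv : (Q' θ₀ * A θ₀ + Q θ₀ * A' θ₀).toBlocks₁₁ = 0 :=
    toBlocks₁₁_eq_zero_of_hasDerivAt (HasDerivAt.matrix_mul_apply (hQ θ₀) (hA θ₀))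
      fun t => by rw [hblock t, toBlocks_fromBlocks₁₁]
  have hsum : (Q' θ₀ * (Q θ₀)ᵀ).toBlocks₁₂ * L21 θ₀ + X = 0 := by
    change (Q' θ₀ * A θ₀).toBlocks₁₁ + (Q θ₀ * A' θ₀).toBlocks₁₁ = 0 at hderiv
    rwa [mul_eq_mul_transpose_mul_of_mul_transpose_eq_one (hQorth θ₀), hblock θ₀,
      hXNYV, toBlocks₁₁_mul_fromBlocks_zero, toBlocks_fromBlocks₁₁] at hderiv
  have hdet : IsUnit (L21 θ₀).det := (isUnit_iff_isUnit_det _).mp (hinv θ₀)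
  calc _ = (Q' θ₀ * (Q θ₀)ᵀ).toBlocks₁₂ * L21 θ₀ * (L21 θ₀)⁻¹ :=
        (mul_nonsing_inv_cancel_right _ _ hdet).symm
    _ = -(X * (L21 θ₀)⁻¹) := by rw [eq_neg_of_add_eq_zero_left hsum, Matrix.neg_mul]

/-- Lower triangular array case: the top-right `k × s` block of `Q' θ₀ * (Q θ₀)ᵀ`
equals `−X * (L21 θ₀)⁻¹`. -/
theorem lowerTriangularCase_block12_of_skew
    (s k l : ℕ) (hs : 0 < s)
    (A A' : ℝ → Matrix (Fin k ⊕ Fin s) (Fin s ⊕ Fin l) ℝ)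
    (Q Q' : ℝ → Matrix (Fin k ⊕ Fin s) (Fin k ⊕ Fin s) ℝ)
    (hA : ∀ θ i j, HasDerivAt (fun t => A t i j) (A' θ i j) θ)
    (hQ : ∀ θ i j, HasDerivAt (fun t => Q t i j) (Q' θ i j) θ)
    (hQorth : ∀ θ, Q θ * (Q θ)ᵀ = 1)
    (L12 : ℝ → Matrix (Fin k) (Fin l) ℝ)
    (L21 : ℝ → Matrix (Fin s) (Fin s) ℝ)
    (L22 : ℝ → Matrix (Fin s) (Fin l) ℝ)
    (hblock : ∀ θ, Q θ * A θ = Matrix.fromBlocks 0 (L12 θ) (L21 θ) (L22 θ))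
    (hlow : ∀ θ (i j : Fin s), i < j → L21 θ i j = 0)
    (hinv : ∀ θ, IsUnit (L21 θ))
    (θ₀ : ℝ)
    (X : Matrix (Fin k) (Fin s) ℝ) (N : Matrix (Fin k) (Fin l) ℝ)
    (Y : Matrix (Fin s) (Fin s) ℝ) (V : Matrix (Fin s) (Fin l) ℝ)
    (hXNYV : Q θ₀ * A' θ₀ = Matrix.fromBlocks X N Y V) :
    (Q' θ₀ * (Q θ₀)ᵀ).toBlocks₁₂ = -(X * (L21 θ₀)⁻¹) :=
  lowerTriangularCase_block12_of_skew_general s k l A A' Q Q' hA hQ hQorth L12 L21 L22 hblock hinv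
    θ₀ X N Y V hXNYV
end

section
/- In the upper-triangular array setting, the derivative of the upper-triangular post-array block satisfies (R11)'(θ₀) = (𝓛ᵀ + 𝓓 + 𝓤) · R11(θ₀), where 𝓛, 𝓓, 𝓤 are the strictly lower-triangular, diagonal, and strictly upper-triangular parts of X · R11(θ₀)⁻¹. -/
open Matrix

/-!
Differentiating `Q Qᵀ = 1` shows that `S = Q' Qᵀ` is skew-symmetric, and differentiating
`Q A = fromBlocks R11 R12 0 R22` in the top-left block gives `R11' = S₁₁ R11 + X`, since
`Q' A = S (Q A)`. Hence `X R11⁻¹ = U - S₁₁` with `U = R11' R11⁻¹` upper triangular. Below the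
diagonal `X R11⁻¹` is `-S₁₁`, so by skew-symmetry its transposed strictly lower part equals the
strictly upper part of `S₁₁`, which cancels against the strictly upper part of `X R11⁻¹`; what
remains is `U`, and `U R11 = R11'`.
-/

theorem HasDerivAt.eq_zero_of_forall_eq {𝕜 F : Type*} [NontriviallyNormedField 𝕜]
    [NormedAddCommGroup F] [NormedSpace 𝕜 F] {f : 𝕜 → F} {f' : F} {x : 𝕜} {c : F}
    (hf : HasDerivAt f f' x) (h : ∀ t, f t = c) : f' = 0 := by
  obtain rfl : f = fun _ => c := funext h
  exact hf.unique (hasDerivAt_const x c)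

namespace Matrix

variable {𝕜 : Type*} [NontriviallyNormedField 𝕜] {l m n p : Type*}

theorem hasDerivAt_mul_apply [Fintype n] {M : 𝕜 → Matrix m n 𝕜} {N : 𝕜 → Matrix n p 𝕜}
    {M' : Matrix m n 𝕜} {N' : Matrix n p 𝕜} {t : 𝕜}
    (hM : ∀ i j, HasDerivAt (fun t => M t i j) (M' i j) t)
    (hN : ∀ i j, HasDerivAt (fun t => N t i j) (N' i j) t) (i : m) (j : p) :
    HasDerivAt (fun t => (M t * N t) i j) ((M' * N t + M t * N') i j) t := by
  simp only [mul_apply, add_apply, ← Finset.sum_add_distrib]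
  exact HasDerivAt.fun_sum fun c _ => (hM i c).mul (hN c j)

theorem BlockTriangular.of_hasDerivAt {α : Type*} [LT α] {b : m → α}
    {M : 𝕜 → Matrix m m 𝕜} {M' : Matrix m m 𝕜} {t : 𝕜}
    (hM : ∀ i j, HasDerivAt (fun t => M t i j) (M' i j) t)
    (htri : ∀ t, (M t).BlockTriangular b) : M'.BlockTriangular b :=
  fun i j hij => (hM i j).eq_zero_of_forall_eq fun t => htri t hij

theorem toBlocks₁₁_eq_of_hasDerivAt {M : 𝕜 → Matrix (l ⊕ m) (n ⊕ p) 𝕜}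
    {M' : Matrix (l ⊕ m) (n ⊕ p) 𝕜} {R : 𝕜 → Matrix l n 𝕜} {R' : Matrix l n 𝕜} {t : 𝕜}
    (hM : ∀ i j, HasDerivAt (fun t => M t i j) (M' i j) t)
    (hR : ∀ i j, HasDerivAt (fun t => R t i j) (R' i j) t)
    (hblock : ∀ t, (M t).toBlocks₁₁ = R t) : M'.toBlocks₁₁ = R' := by
  ext i j
  have hR := hR i j
  simp only [← hblock] at hR
  exact (hM (.inl i) (.inl j)).unique hR

theorem transpose_mul_transpose_eq_neg_of_hasDerivAt [Fintype m] [DecidableEq m]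
    {Q : 𝕜 → Matrix m m 𝕜} {Q' : Matrix m m 𝕜} {t : 𝕜}
    (hQ : ∀ i j, HasDerivAt (fun t => Q t i j) (Q' i j) t)
    (horth : ∀ t, Q t * (Q t)ᵀ = 1) : (Q' * (Q t)ᵀ)ᵀ = -(Q' * (Q t)ᵀ) := by
  have hzero : Q' * (Q t)ᵀ + Q t * Q'ᵀ = 0 := by
    ext i j
    exact (hasDerivAt_mul_apply (N := fun t => (Q t)ᵀ) (N' := Q'ᵀ) hQ (fun i j => hQ j i) i j
      ).eq_zero_of_forall_eq fun t => by rw [horth t]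
  rw [transpose_mul, transpose_transpose]
  exact eq_neg_of_add_eq_zero_right hzero

theorem toBlocks₁₁_mul_fromBlocks_zero [Fintype l] [Fintype m] {α : Type*}
    [NonUnitalNonAssocSemiring α] (S : Matrix (l ⊕ m) (l ⊕ m) α) (A : Matrix l n α)
    (B : Matrix l p α) (D : Matrix m p α) :
    (S * fromBlocks A B 0 D).toBlocks₁₁ = S.toBlocks₁₁ * A := by
  rw [← fromBlocks_toBlocks S, fromBlocks_multiply]
  simp

end Matrix

theorem strictLowerPart_transpose_add_diagPart_add_strictUpperPart_sub {s : ℕ}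
    {U S : Matrix (Fin s) (Fin s) ℝ} (hU : U.BlockTriangular id) (hS : Sᵀ = -S) :
    (strictLowerPart (U - S))ᵀ + diagPart (U - S) + strictUpperPart (U - S) = U := by
  ext i j
  have hSji : S j i = -S i j := by simpa using congrFun (congrFun hS i) j
  simp only [Matrix.add_apply, Matrix.sub_apply, transpose_apply, strictLowerPart, diagPart,
    strictUpperPart, of_apply]
  rcases lt_trichotomy i j with hij | rfl | hij
  · rw [if_pos hij, if_neg hij.ne, if_pos hij, hU hij, hSji]
    ring
  · rw [if_neg (lt_irrefl i), if_pos rfl]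
    linarith
  · rw [if_neg hij.not_gt, if_neg hij.ne', if_neg hij.not_gt, hU hij]
    ring

theorem upperTriangularCase_R11_deriv_general
    (s k l : ℕ)
    (A A' : ℝ → Matrix (Fin s ⊕ Fin k) (Fin s ⊕ Fin l) ℝ)
    (Q Q' : ℝ → Matrix (Fin s ⊕ Fin k) (Fin s ⊕ Fin k) ℝ)
    (hA : ∀ θ i j, HasDerivAt (fun t => A t i j) (A' θ i j) θ)
    (hQ : ∀ θ i j, HasDerivAt (fun t => Q t i j) (Q' θ i j) θ)
    (hQorth : ∀ θ, Q θ * (Q θ)ᵀ = 1)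
    (R11 : ℝ → Matrix (Fin s) (Fin s) ℝ)
    (R12 : ℝ → Matrix (Fin s) (Fin l) ℝ)
    (R22 : ℝ → Matrix (Fin k) (Fin l) ℝ)
    (hblock : ∀ θ, Q θ * A θ = Matrix.fromBlocks (R11 θ) (R12 θ) 0 (R22 θ))
    (hupp : ∀ θ (i j : Fin s), j < i → R11 θ i j = 0)
    (hinv : ∀ θ, IsUnit (R11 θ))
    (θ₀ : ℝ)
    (X : Matrix (Fin s) (Fin s) ℝ) (N : Matrix (Fin s) (Fin l) ℝ)
    (Y : Matrix (Fin k) (Fin s) ℝ) (V : Matrix (Fin k) (Fin l) ℝ)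
    (hXNYV : Q θ₀ * A' θ₀ = Matrix.fromBlocks X N Y V)
    (R11' : Matrix (Fin s) (Fin s) ℝ)
    (hR11' : ∀ i j, HasDerivAt (fun t => R11 t i j) (R11' i j) θ₀) :
    R11' = ((strictLowerPart (X * (R11 θ₀)⁻¹))ᵀ + diagPart (X * (R11 θ₀)⁻¹)
      + strictUpperPart (X * (R11 θ₀)⁻¹)) * R11 θ₀ := by
  set R := R11 θ₀
  have hR : IsUnit R.det := (isUnit_iff_isUnit_det R).mp (hinv θ₀)
  have : Invertible R := R.invertibleOfIsUnitDet hR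
  set S := Q' θ₀ * (Q θ₀)ᵀ
  have hS : Sᵀ = -S := transpose_mul_transpose_eq_neg_of_hasDerivAt (hQ θ₀) hQorth
  have hS₁₁ : S.toBlocks₁₁ᵀ = -S.toBlocks₁₁ := by
    ext i j
    exact congrFun (congrFun hS (.inl i)) (.inl j)
  have hQ'A : Q' θ₀ * A θ₀ = S * (Q θ₀ * A θ₀) := by
    rw [Matrix.mul_assoc, ← Matrix.mul_assoc (Q θ₀)ᵀ, mul_eq_one_comm.mp (hQorth θ₀),
      Matrix.one_mul]
  have hR11'_eq : R11' = S.toBlocks₁₁ * R + X := by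
    rw [← toBlocks₁₁_eq_of_hasDerivAt (hasDerivAt_mul_apply (hQ θ₀) (hA θ₀)) hR11'
      fun t => by rw [hblock t, toBlocks_fromBlocks₁₁], hQ'A, hblock, hXNYV]
    exact congrArg₂ (fun M N : Matrix (Fin s) (Fin s) ℝ => M + N)
      (toBlocks₁₁_mul_fromBlocks_zero S _ _ _) (toBlocks_fromBlocks₁₁ X N Y V)
  have hU : (R11' * R⁻¹).BlockTriangular id :=
    (BlockTriangular.of_hasDerivAt hR11' fun θ i j => hupp θ i j).mul
      (blockTriangular_inv_of_blockTriangular fun i j => hupp θ₀ i j)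
  have hXR : X * R⁻¹ = R11' * R⁻¹ - S.toBlocks₁₁ := by
    rw [hR11'_eq, add_mul, mul_assoc, mul_nonsing_inv R hR, mul_one, add_sub_cancel_left]
  rw [hXR, strictLowerPart_transpose_add_diagPart_add_strictUpperPart_sub hU hS₁₁, mul_assoc,
    nonsing_inv_mul R hR, mul_one]

/-- Upper triangular array case: the derivative of the upper-triangular post-array block
satisfies `(R11)' = (𝓛ᵀ + 𝓓 + 𝓤) * R11`, where `𝓛, 𝓓, 𝓤` are the strictly
lower-triangular, diagonal and strictly upper-triangular parts of `X * R11⁻¹`. -/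
theorem upperTriangularCase_R11_deriv
    (s k l : ℕ) (hs : 0 < s)
    (A A' : ℝ → Matrix (Fin s ⊕ Fin k) (Fin s ⊕ Fin l) ℝ)
    (Q Q' : ℝ → Matrix (Fin s ⊕ Fin k) (Fin s ⊕ Fin k) ℝ)
    (hA : ∀ θ i j, HasDerivAt (fun t => A t i j) (A' θ i j) θ)
    (hQ : ∀ θ i j, HasDerivAt (fun t => Q t i j) (Q' θ i j) θ)
    (hQorth : ∀ θ, Q θ * (Q θ)ᵀ = 1)
    (R11 : ℝ → Matrix (Fin s) (Fin s) ℝ)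
    (R12 : ℝ → Matrix (Fin s) (Fin l) ℝ)
    (R22 : ℝ → Matrix (Fin k) (Fin l) ℝ)
    (hblock : ∀ θ, Q θ * A θ = Matrix.fromBlocks (R11 θ) (R12 θ) 0 (R22 θ))
    (hupp : ∀ θ (i j : Fin s), j < i → R11 θ i j = 0)
    (hinv : ∀ θ, IsUnit (R11 θ))
    (θ₀ : ℝ)
    (X : Matrix (Fin s) (Fin s) ℝ) (N : Matrix (Fin s) (Fin l) ℝ)
    (Y : Matrix (Fin k) (Fin s) ℝ) (V : Matrix (Fin k) (Fin l) ℝ)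
    (hXNYV : Q θ₀ * A' θ₀ = Matrix.fromBlocks X N Y V)
    (R11' : Matrix (Fin s) (Fin s) ℝ)
    (hR11' : ∀ i j, HasDerivAt (fun t => R11 t i j) (R11' i j) θ₀) :
    R11' = ((strictLowerPart (X * (R11 θ₀)⁻¹))ᵀ + diagPart (X * (R11 θ₀)⁻¹)
      + strictUpperPart (X * (R11 θ₀)⁻¹)) * R11 θ₀ :=
  upperTriangularCase_R11_deriv_general s k l A A' Q Q' hA hQ hQorth R11 R12 R22 hblock hupp hinv θ₀
    X N Y V hXNYV R11' hR11'
end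

section
/- In the square-root covariance filter array setting, the (1,1) block of the post-array factors the innovation covariance: Sᵀ · S = R + H · P · Hᵀ. -/
/-!
An orthogonal `Θ` preserves Gram matrices, `(Θ A)ᵀ (Θ A) = Aᵀ A`, and it acts on each block
column of the pre-array separately. So the first block columns `[R½; P½ Hᵀ; 0]` and `[S; 0; 0]`
have the same Gram matrix.
-/

open Matrix

namespace Matrix

variable {R : Type*} {m₁ m₂ n₁ n₂ k l n : Type*}

theorem fromRows_fromCols_eq_fromCols_fromRows (A₁₁ : Matrix m₁ n₁ R) (A₁₂ : Matrix m₁ n₂ R)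
    (A₂₁ : Matrix m₂ n₁ R) (A₂₂ : Matrix m₂ n₂ R) :
    fromRows (fromCols A₁₁ A₁₂) (fromCols A₂₁ A₂₂) =
      fromCols (fromRows A₁₁ A₂₁) (fromRows A₁₂ A₂₂) := by
  rw [fromRows_fromCols_eq_fromBlocks, fromCols_fromRows_eq_fromBlocks]

variable [CommRing R]

theorem transpose_mul_self_fromRows [Fintype m₁] [Fintype m₂]
    (A₁ : Matrix m₁ n R) (A₂ : Matrix m₂ n R) :
    (fromRows A₁ A₂)ᵀ * fromRows A₁ A₂ = A₁ᵀ * A₁ + A₂ᵀ * A₂ := by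
  rw [transpose_fromRows, fromCols_mul_fromRows]

theorem transpose_mul_self_mul_of_transpose_mul_self_eq_one [Fintype k] [Fintype l]
    [DecidableEq l] {Θ : Matrix k l R} (hΘ : Θᵀ * Θ = 1) (A : Matrix l n R) :
    (Θ * A)ᵀ * (Θ * A) = Aᵀ * A := by
  rw [transpose_mul, Matrix.mul_assoc, ← Matrix.mul_assoc Θᵀ, hΘ, Matrix.one_mul]

end Matrix

theorem srcf_innovation_covariance_factor_general
    (n m q : ℕ)
    (F : Matrix (Fin n) (Fin n) ℝ) (H : Matrix (Fin m) (Fin n) ℝ)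
    (G : Matrix (Fin n) (Fin q) ℝ)
    (Psqrt : Matrix (Fin n) (Fin n) ℝ) (Rsqrt : Matrix (Fin m) (Fin m) ℝ)
    (Qwsqrt : Matrix (Fin q) (Fin q) ℝ)
    (Θ : Matrix ((Fin m ⊕ Fin n) ⊕ Fin q) ((Fin m ⊕ Fin n) ⊕ Fin q) ℝ)
    (hΘ : Θᵀ * Θ = 1)
    (S : Matrix (Fin m) (Fin m) ℝ) (T : Matrix (Fin m) (Fin n) ℝ)
    (M : Matrix (Fin n) (Fin n) ℝ)
    (harray : Θ * Matrix.fromRows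
        (Matrix.fromRows (Matrix.fromCols Rsqrt 0)
          (Matrix.fromCols (Psqrt * Hᵀ) (Psqrt * Fᵀ)))
        (Matrix.fromCols 0 (Qwsqrt * Gᵀ))
      = Matrix.fromRows
        (Matrix.fromRows (Matrix.fromCols S T) (Matrix.fromCols 0 M))
        (Matrix.fromCols 0 0)) :
    Sᵀ * S = Rsqrtᵀ * Rsqrt + H * (Psqrtᵀ * Psqrt) * Hᵀ := by
  simp only [fromRows_fromCols_eq_fromCols_fromRows, mul_fromCols] at harray
  obtain ⟨hfirst, -⟩ := fromCols_inj harray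
  have hgram := transpose_mul_self_mul_of_transpose_mul_self_eq_one hΘ
    (fromRows (fromRows Rsqrt (Psqrt * Hᵀ)) 0)
  rw [hfirst] at hgram
  simpa only [transpose_mul_self_fromRows, transpose_mul, transpose_transpose, Matrix.mul_zero,
    add_zero, Matrix.mul_assoc] using hgram

/-- Square-root covariance filter array: the (1,1) block of the post-array factors the
innovation covariance, `Sᵀ * S = R + H * P * Hᵀ` with `P = (P½)ᵀ * P½` and
`R = (R½)ᵀ * R½`. -/
theorem srcf_innovation_covariance_factor
    (n m q : ℕ) (hn : 0 < n) (hm : 0 < m) (hq : 0 < q)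
    (F : Matrix (Fin n) (Fin n) ℝ) (H : Matrix (Fin m) (Fin n) ℝ)
    (G : Matrix (Fin n) (Fin q) ℝ)
    (Psqrt : Matrix (Fin n) (Fin n) ℝ) (Rsqrt : Matrix (Fin m) (Fin m) ℝ)
    (Qwsqrt : Matrix (Fin q) (Fin q) ℝ)
    (Θ : Matrix ((Fin m ⊕ Fin n) ⊕ Fin q) ((Fin m ⊕ Fin n) ⊕ Fin q) ℝ)
    (hΘ : Θᵀ * Θ = 1)
    (S : Matrix (Fin m) (Fin m) ℝ) (T : Matrix (Fin m) (Fin n) ℝ)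
    (M : Matrix (Fin n) (Fin n) ℝ)
    (harray : Θ * Matrix.fromRows
        (Matrix.fromRows (Matrix.fromCols Rsqrt 0)
          (Matrix.fromCols (Psqrt * Hᵀ) (Psqrt * Fᵀ)))
        (Matrix.fromCols 0 (Qwsqrt * Gᵀ))
      = Matrix.fromRows
        (Matrix.fromRows (Matrix.fromCols S T) (Matrix.fromCols 0 M))
        (Matrix.fromCols 0 0)) :
    Sᵀ * S = Rsqrtᵀ * Rsqrt + H * (Psqrtᵀ * Psqrt) * Hᵀ :=
  srcf_innovation_covariance_factor_general n m q F H G Psqrt Rsqrt Qwsqrt Θ hΘ S T M harray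
end

section
/- In the square-root covariance filter array setting, the (2,2) block of the post-array satisfies the factored Riccati difference equation: Mᵀ · M = F · P · Fᵀ + G · Qw · Gᵀ − Tᵀ · T; equivalently Tᵀ · T + Mᵀ · M = F · P · Fᵀ + G · Qw · Gᵀ. -/
/-!
An orthogonal `Θ` preserves Gram matrices: if `Θ * X = Y` then `Xᵀ * X = Yᵀ * Y`. Since `Θ` acts on
rows, it maps the second block column of the pre-array to that of the post-array, and the Gram
matrices of these two block columns are `F P Fᵀ + G Qw Gᵀ` and `Tᵀ T + Mᵀ M`.
-/

open Matrix

namespace Matrix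

variable {R : Type*} {k l m n : Type*}

theorem transpose_mul_self_eq_of_mul_eq [CommSemiring R] [Fintype m] [DecidableEq m]
    {Θ : Matrix m m R} {X Y : Matrix m n R} (hΘ : Θᵀ * Θ = 1) (h : Θ * X = Y) :
    Xᵀ * X = Yᵀ * Y := by
  rw [← h, transpose_mul, Matrix.mul_assoc, ← Matrix.mul_assoc Θᵀ, hΘ, Matrix.one_mul]

theorem toCols₂_mul [Semiring R] [Fintype m] (Θ : Matrix n m R) (X : Matrix m (k ⊕ l) R) :
    (Θ * X).toCols₂ = Θ * X.toCols₂ :=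
  rfl

theorem toCols₂_fromRows (A : Matrix m (k ⊕ l) R) (B : Matrix n (k ⊕ l) R) :
    (fromRows A B).toCols₂ = fromRows A.toCols₂ B.toCols₂ := by
  ext (i | i) j <;> rfl

theorem transpose_fromRows_mul_self [CommSemiring R] [Fintype m] [Fintype n]
    (A : Matrix m l R) (B : Matrix n l R) :
    (fromRows A B)ᵀ * fromRows A B = Aᵀ * A + Bᵀ * B := by
  rw [transpose_fromRows, fromCols_mul_fromRows]

end Matrix

theorem srcf_riccati_factor_general
    (n m q : ℕ)
    (F : Matrix (Fin n) (Fin n) ℝ) (H : Matrix (Fin m) (Fin n) ℝ)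
    (G : Matrix (Fin n) (Fin q) ℝ)
    (Psqrt : Matrix (Fin n) (Fin n) ℝ) (Rsqrt : Matrix (Fin m) (Fin m) ℝ)
    (Qwsqrt : Matrix (Fin q) (Fin q) ℝ)
    (Θ : Matrix ((Fin m ⊕ Fin n) ⊕ Fin q) ((Fin m ⊕ Fin n) ⊕ Fin q) ℝ)
    (hΘ : Θᵀ * Θ = 1)
    (S : Matrix (Fin m) (Fin m) ℝ) (T : Matrix (Fin m) (Fin n) ℝ)
    (M : Matrix (Fin n) (Fin n) ℝ)
    (harray : Θ * Matrix.fromRows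
        (Matrix.fromRows (Matrix.fromCols Rsqrt 0)
          (Matrix.fromCols (Psqrt * Hᵀ) (Psqrt * Fᵀ)))
        (Matrix.fromCols 0 (Qwsqrt * Gᵀ))
      = Matrix.fromRows
        (Matrix.fromRows (Matrix.fromCols S T) (Matrix.fromCols 0 M))
        (Matrix.fromCols 0 0)) :
    Mᵀ * M = F * (Psqrtᵀ * Psqrt) * Fᵀ + G * (Qwsqrtᵀ * Qwsqrt) * Gᵀ - Tᵀ * T ∧
      Tᵀ * T + Mᵀ * M = F * (Psqrtᵀ * Psqrt) * Fᵀ + G * (Qwsqrtᵀ * Qwsqrt) * Gᵀ := by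
  have hcol : Θ * fromRows (fromRows 0 (Psqrt * Fᵀ)) (Qwsqrt * Gᵀ) = fromRows (fromRows T M) 0 := by
    have h := congrArg toCols₂ harray
    simp only [toCols₂_mul, toCols₂_fromRows, toCols₂_fromCols] at h
    exact h
  have hgram := transpose_mul_self_eq_of_mul_eq hΘ hcol
  simp only [transpose_fromRows_mul_self, transpose_zero, Matrix.zero_mul, zero_add, add_zero,
    transpose_mul, transpose_transpose] at hgram
  have hsum : Tᵀ * T + Mᵀ * M = F * (Psqrtᵀ * Psqrt) * Fᵀ + G * (Qwsqrtᵀ * Qwsqrt) * Gᵀ := by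
    simp only [← hgram, Matrix.mul_assoc]
  exact ⟨eq_sub_of_add_eq' hsum, hsum⟩

/-- Square-root covariance filter array: the (2,2) block of the post-array satisfies the
factored Riccati difference equation `Mᵀ * M = F * P * Fᵀ + G * Qw * Gᵀ − Tᵀ * T`,
equivalently `Tᵀ * T + Mᵀ * M = F * P * Fᵀ + G * Qw * Gᵀ`. -/
theorem srcf_riccati_factor
    (n m q : ℕ) (hn : 0 < n) (hm : 0 < m) (hq : 0 < q)
    (F : Matrix (Fin n) (Fin n) ℝ) (H : Matrix (Fin m) (Fin n) ℝ)
    (G : Matrix (Fin n) (Fin q) ℝ)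
    (Psqrt : Matrix (Fin n) (Fin n) ℝ) (Rsqrt : Matrix (Fin m) (Fin m) ℝ)
    (Qwsqrt : Matrix (Fin q) (Fin q) ℝ)
    (Θ : Matrix ((Fin m ⊕ Fin n) ⊕ Fin q) ((Fin m ⊕ Fin n) ⊕ Fin q) ℝ)
    (hΘ : Θᵀ * Θ = 1)
    (S : Matrix (Fin m) (Fin m) ℝ) (T : Matrix (Fin m) (Fin n) ℝ)
    (M : Matrix (Fin n) (Fin n) ℝ)
    (harray : Θ * Matrix.fromRows
        (Matrix.fromRows (Matrix.fromCols Rsqrt 0)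
          (Matrix.fromCols (Psqrt * Hᵀ) (Psqrt * Fᵀ)))
        (Matrix.fromCols 0 (Qwsqrt * Gᵀ))
      = Matrix.fromRows
        (Matrix.fromRows (Matrix.fromCols S T) (Matrix.fromCols 0 M))
        (Matrix.fromCols 0 0)) :
    Mᵀ * M = F * (Psqrtᵀ * Psqrt) * Fᵀ + G * (Qwsqrtᵀ * Qwsqrt) * Gᵀ - Tᵀ * T ∧
      Tᵀ * T + Mᵀ * M = F * (Psqrtᵀ * Psqrt) * Fᵀ + G * (Qwsqrtᵀ * Qwsqrt) * Gᵀ :=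
  srcf_riccati_factor_general n m q F H G Psqrt Rsqrt Qwsqrt Θ hΘ S T M harray
end

section
/- In the extended square-root covariance filter array setting (with the extra data column), if R½ and P½ are invertible, then the post-array vector blocks satisfy the normalized innovation and state-update equations: Sᵀ · ē = z − H · x̂ and Mᵀ · w = F · x̂ + Tᵀ · ē. -/
/-!
An orthogonal `Θ` preserves all inner products between columns: if `Θ * [L | c] = [L' | c']`
then `Lᵀ * c = L'ᵀ * c'`. For the pre-array, `Lᵀ * c` is `[H x̂ - z; F x̂]`, because the
factors `(R½ᵀ)⁻¹` and `(P½ᵀ)⁻¹` in the data column cancel against `R½ᵀ` and `P½ᵀ` in `Lᵀ`;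
for the post-array it is `[-Sᵀ ē; Mᵀ w - Tᵀ ē]`. Comparing blocks gives both equations.
-/

open Matrix

namespace Matrix

variable {R : Type*} [CommRing R] {l m n k : Type*}

theorem fromRows_add_fromRows (A : Matrix m k R) (B : Matrix n k R) (C : Matrix m k R)
    (D : Matrix n k R) : fromRows A B + fromRows C D = fromRows (A + C) (B + D) := by
  ext (i | i) j <;> rfl

theorem transpose_mul_mul_of_transpose_mul_self_eq_one [Fintype l] [DecidableEq l]
    {Θ : Matrix l l R} (hΘ : Θᵀ * Θ = 1) (A : Matrix l m R) (B : Matrix l n R) :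
    (Θ * A)ᵀ * (Θ * B) = Aᵀ * B := by
  rw [Matrix.transpose_mul, Matrix.mul_assoc, ← Matrix.mul_assoc Θᵀ, hΘ, Matrix.one_mul]

theorem transpose_mul_eq_of_mul_fromCols_eq [Fintype l] [DecidableEq l] {Θ : Matrix l l R}
    (hΘ : Θᵀ * Θ = 1) {L L' : Matrix l m R} {c c' : Matrix l n R}
    (h : Θ * fromCols L c = fromCols L' c') : Lᵀ * c = L'ᵀ * c' := by
  rw [mul_fromCols] at h
  obtain ⟨rfl, rfl⟩ := fromCols_inj h
  exact (transpose_mul_mul_of_transpose_mul_self_eq_one hΘ L c).symm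

theorem fromRows_transpose_mul_fromRows [Fintype m] [Fintype n] (A : Matrix m k R)
    (B : Matrix n k R) (u : Matrix m l R) (v : Matrix n l R) :
    (fromRows A B)ᵀ * fromRows u v = Aᵀ * u + Bᵀ * v := by
  rw [transpose_fromRows, fromCols_mul_fromRows]

theorem fromCols_transpose_mul [Fintype l] (A : Matrix l m R) (B : Matrix l n R)
    (u : Matrix l k R) : (fromCols A B)ᵀ * u = fromRows (Aᵀ * u) (Bᵀ * u) := by
  rw [transpose_fromCols, fromRows_mul]

end Matrix

section SquareRootArray

variable {K : Type*} [CommRing K] {m n p k : Type*} [Fintype m] [Fintype n] [Fintype p]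

theorem esrcf_preArray_transpose_mul_dataColumn [DecidableEq m] [DecidableEq n]
    {F : Matrix n n K} {H : Matrix m n K} {G : Matrix n p K} {Psqrt : Matrix n n K} {Rsqrt : Matrix m m K} {Qwsqrt : Matrix p p K}
    (hRsqrt : IsUnit Rsqrt) (hPsqrt : IsUnit Psqrt) (z : Matrix m k K)
    (xhat : Matrix n k K) :
    (fromRows (fromRows (fromCols Rsqrt 0) (fromCols (Psqrt * Hᵀ) (Psqrt * Fᵀ)))
        (fromCols 0 (Qwsqrt * Gᵀ)))ᵀ *
      fromRows (fromRows (-((Rsqrtᵀ)⁻¹ * z)) ((Psqrtᵀ)⁻¹ * xhat)) (0 : Matrix p k K)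
      = fromRows (H * xhat - z) (F * xhat) := by
  have hR : IsUnit Rsqrtᵀ.det := by rwa [det_transpose, ← isUnit_iff_isUnit_det]
  have hP : IsUnit Psqrtᵀ.det := by rwa [det_transpose, ← isUnit_iff_isUnit_det]
  simp only [fromRows_transpose_mul_fromRows, fromCols_transpose_mul, Matrix.transpose_mul,
    transpose_transpose, Matrix.mul_assoc, mul_nonsing_inv_cancel_left _ _ hR,
    mul_nonsing_inv_cancel_left _ _ hP, transpose_zero, Matrix.zero_mul, Matrix.mul_zero,
    Matrix.mul_neg, fromRows_neg, fromRows_add_fromRows, neg_zero, add_zero, zero_add,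
    neg_add_eq_sub]

theorem esrcf_postArray_transpose_mul_dataColumn (S : Matrix m m K) (T : Matrix m n K)
    (M : Matrix n n K) (ebar : Matrix m k K) (w : Matrix n k K)
    (γ : Matrix p k K) :
    (fromRows (fromRows (fromCols S T) (fromCols 0 M)) (fromCols (0 : Matrix p m K) 0))ᵀ *
      fromRows (fromRows (-ebar) w) γ
      = fromRows (-(Sᵀ * ebar)) (Mᵀ * w - Tᵀ * ebar) := by
  simp only [fromRows_transpose_mul_fromRows, fromCols_transpose_mul, transpose_zero,
    Matrix.zero_mul, Matrix.mul_neg, fromRows_neg, fromRows_add_fromRows, fromRows_zero,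
    add_zero, neg_add_eq_sub]

end SquareRootArray

theorem esrcf_innovation_and_state_update_general
    (n m q : ℕ)
    (F : Matrix (Fin n) (Fin n) ℝ) (H : Matrix (Fin m) (Fin n) ℝ)
    (G : Matrix (Fin n) (Fin q) ℝ)
    (Psqrt : Matrix (Fin n) (Fin n) ℝ) (Rsqrt : Matrix (Fin m) (Fin m) ℝ)
    (Qwsqrt : Matrix (Fin q) (Fin q) ℝ)
    (hRsqrt : IsUnit Rsqrt) (hPsqrt : IsUnit Psqrt)
    (z : Matrix (Fin m) (Fin 1) ℝ) (xhat : Matrix (Fin n) (Fin 1) ℝ)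
    (Θ : Matrix ((Fin m ⊕ Fin n) ⊕ Fin q) ((Fin m ⊕ Fin n) ⊕ Fin q) ℝ)
    (hΘ : Θᵀ * Θ = 1)
    (S : Matrix (Fin m) (Fin m) ℝ) (T : Matrix (Fin m) (Fin n) ℝ)
    (M : Matrix (Fin n) (Fin n) ℝ)
    (ebar : Matrix (Fin m) (Fin 1) ℝ) (w : Matrix (Fin n) (Fin 1) ℝ)
    (γ : Matrix (Fin q) (Fin 1) ℝ)
    (harray : Θ * Matrix.fromCols
        (Matrix.fromRows
          (Matrix.fromRows (Matrix.fromCols Rsqrt 0)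
            (Matrix.fromCols (Psqrt * Hᵀ) (Psqrt * Fᵀ)))
          (Matrix.fromCols 0 (Qwsqrt * Gᵀ)))
        (Matrix.fromRows
          (Matrix.fromRows (-((Rsqrtᵀ)⁻¹ * z)) ((Psqrtᵀ)⁻¹ * xhat)) 0)
      = Matrix.fromCols
        (Matrix.fromRows
          (Matrix.fromRows (Matrix.fromCols S T) (Matrix.fromCols 0 M))
          (Matrix.fromCols 0 0))
        (Matrix.fromRows (Matrix.fromRows (-ebar) w) γ)) :
    Sᵀ * ebar = z - H * xhat ∧ Mᵀ * w = F * xhat + Tᵀ * ebar := by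
  have hcross := transpose_mul_eq_of_mul_fromCols_eq hΘ harray
  rw [esrcf_preArray_transpose_mul_dataColumn hRsqrt hPsqrt,
    esrcf_postArray_transpose_mul_dataColumn] at hcross
  obtain ⟨hinnov, hstate⟩ := fromRows_inj hcross
  constructor
  · rw [← neg_sub, hinnov, neg_neg]
  · rw [hstate, sub_add_cancel]

/-- Extended square-root covariance filter array: if `R½` and `P½` are invertible, the
post-array vector blocks satisfy the normalized innovation and state-update equations
`Sᵀ * ē = z − H * x̂` and `Mᵀ * w = F * x̂ + Tᵀ * ē`.  Vectors are represented as
single-column matrices. -/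
theorem esrcf_innovation_and_state_update
    (n m q : ℕ) (hn : 0 < n) (hm : 0 < m) (hq : 0 < q)
    (F : Matrix (Fin n) (Fin n) ℝ) (H : Matrix (Fin m) (Fin n) ℝ)
    (G : Matrix (Fin n) (Fin q) ℝ)
    (Psqrt : Matrix (Fin n) (Fin n) ℝ) (Rsqrt : Matrix (Fin m) (Fin m) ℝ)
    (Qwsqrt : Matrix (Fin q) (Fin q) ℝ)
    (hRsqrt : IsUnit Rsqrt) (hPsqrt : IsUnit Psqrt)
    (z : Matrix (Fin m) (Fin 1) ℝ) (xhat : Matrix (Fin n) (Fin 1) ℝ)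
    (Θ : Matrix ((Fin m ⊕ Fin n) ⊕ Fin q) ((Fin m ⊕ Fin n) ⊕ Fin q) ℝ)
    (hΘ : Θᵀ * Θ = 1)
    (S : Matrix (Fin m) (Fin m) ℝ) (T : Matrix (Fin m) (Fin n) ℝ)
    (M : Matrix (Fin n) (Fin n) ℝ)
    (ebar : Matrix (Fin m) (Fin 1) ℝ) (w : Matrix (Fin n) (Fin 1) ℝ)
    (γ : Matrix (Fin q) (Fin 1) ℝ)
    (harray : Θ * Matrix.fromCols
        (Matrix.fromRows
          (Matrix.fromRows (Matrix.fromCols Rsqrt 0)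
            (Matrix.fromCols (Psqrt * Hᵀ) (Psqrt * Fᵀ)))
          (Matrix.fromCols 0 (Qwsqrt * Gᵀ)))
        (Matrix.fromRows
          (Matrix.fromRows (-((Rsqrtᵀ)⁻¹ * z)) ((Psqrtᵀ)⁻¹ * xhat)) 0)
      = Matrix.fromCols
        (Matrix.fromRows
          (Matrix.fromRows (Matrix.fromCols S T) (Matrix.fromCols 0 M))
          (Matrix.fromCols 0 0))
        (Matrix.fromRows (Matrix.fromRows (-ebar) w) γ)) :
    Sᵀ * ebar = z - H * xhat ∧ Mᵀ * w = F * xhat + Tᵀ * ebar :=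
  esrcf_innovation_and_state_update_general n m q F H G Psqrt Rsqrt Qwsqrt hRsqrt hPsqrt z xhat Θ hΘ
    S T M ebar w γ harray
end
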